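/- arXiv:2410.13120 — 2 statements merged into one kernel-verified Lean document; each statement's English description precedes it below -/
import Mathlib

section
/- Let X and Y be finite-dimensional *-vector spaces of the same dimension, and let ⟨·,·⟩_π and ⟨·,·⟩_σ be non-degenerate Hermiticity preserving bilinear pairings on X × Y. The following are equivalent: (i) there exists λ > 0 such that ⟨x,y⟩_π = λ⟨x,y⟩_σ for all x ∈ X, y ∈ Y; (ii) for every closed convex cone C of X_h, the dual cones of C in Y_h with respect to ⟨·,·⟩_π and ⟨·,·⟩_σ coincide; (iii) for every closed convex cone D of Y_h, the dual cones of D in X_h with respect to ⟨·,·⟩_π and ⟨·,·⟩_σ coincide. -/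
open scoped ComplexOrder

/-- A closed convex cone consisting of Hermitian elements of a ∗-vector space. -/
def IsClosedConvexConeH {X : Type*} [NormedAddCommGroup X] [Module ℂ X] [Star X]
    (C : Set X) : Prop :=
  (∀ x ∈ C, star x = x) ∧ (0 : X) ∈ C ∧ (∀ x ∈ C, ∀ y ∈ C, x + y ∈ C) ∧
    (∀ r : ℝ, 0 ≤ r → ∀ x ∈ C, (r : ℂ) • x ∈ C) ∧ IsClosed C

/-- The dual cone in `Y_h` of a subset of `X_h` with respect to a bilinear pairing. -/
def dualConeR {X Y : Type*} [AddCommGroup X] [Module ℂ X]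
    [AddCommGroup Y] [Module ℂ Y] [Star Y]
    (B : X →ₗ[ℂ] Y →ₗ[ℂ] ℂ) (C : Set X) : Set Y :=
  {y | star y = y ∧ ∀ x ∈ C, 0 ≤ B x y}

/-- The dual cone in `X_h` of a subset of `Y_h` with respect to a bilinear pairing. -/
def dualConeL {X Y : Type*} [AddCommGroup X] [Module ℂ X] [Star X]
    [AddCommGroup Y] [Module ℂ Y]
    (B : X →ₗ[ℂ] Y →ₗ[ℂ] ℂ) (D : Set Y) : Set X :=
  {x | star x = x ∧ ∀ y ∈ D, 0 ≤ B x y}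

/-!
Duality against a single ray `ℝ≥0 • x` only records the sign of `⟨x, ·⟩`, so either cone
condition says that the real forms induced by `Bπ` and `Bσ` on `X_h × Y_h` have the same sign
everywhere. Two real linear functionals with the same sign pattern are positive multiples of each
other. Applied in each variable this gives constants `a x` and `b y` with `a x = b y` whenever
`⟨x, y⟩_σ ≠ 0`; by non-degeneracy any two nonzero `x` have a common such `y`, so `a` is constant.
Since Hermitian elements span, the proportionality on `X_h × Y_h` extends to `X × Y`.
-/

namespace LinearMap

theorem exists_apply_ne_zero_and_apply_ne_zero {R V M N : Type*} [Semiring R]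
    [AddCommMonoid V] [Module R V] [AddCommMonoid M] [Module R M] [AddCommMonoid N] [Module R N]
    {f : V →ₗ[R] M} {g : V →ₗ[R] N} (hf : f ≠ 0) (hg : g ≠ 0) :
    ∃ v, f v ≠ 0 ∧ g v ≠ 0 := by
  obtain ⟨a, ha⟩ := DFunLike.ne_iff.mp hf
  obtain ⟨b, hb⟩ := DFunLike.ne_iff.mp hg
  by_cases hga : g a = 0
  · by_cases hfb : f b = 0
    · exact ⟨a + b, by simpa [hfb] using ha, by simpa [hga] using hb⟩
    · exact ⟨b, hfb, hb⟩
  · exact ⟨a, ha, hga⟩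

variable {𝕜 V W : Type*} [Field 𝕜] [LinearOrder 𝕜] [IsStrictOrderedRing 𝕜]
  [AddCommGroup V] [Module 𝕜 V] [AddCommGroup W] [Module 𝕜 W]

theorem exists_pos_smul_eq_of_nonneg_iff {f g : V →ₗ[𝕜] 𝕜} (h : ∀ v, 0 ≤ f v ↔ 0 ≤ g v) :
    ∃ c : 𝕜, 0 < c ∧ f = c • g := by
  have hzero : ∀ v, f v = 0 ↔ g v = 0 := fun v ↦ by
    have hneg : f v ≤ 0 ↔ g v ≤ 0 := by simpa using h (-v)
    rw [le_antisymm_iff, le_antisymm_iff, hneg, h v]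
  by_cases hg : g = 0
  · refine ⟨1, one_pos, ?_⟩
    ext v
    simpa [hg] using (hzero v).mpr (by simp [hg])
  obtain ⟨v₀, hv₀⟩ : ∃ v₀, 0 < g v₀ := by
    obtain ⟨v, hv⟩ := DFunLike.ne_iff.mp hg
    rcases (show g v ≠ 0 by simpa using hv).lt_or_gt with hlt | hgt
    · exact ⟨-v, by simpa using hlt⟩
    · exact ⟨v, hgt⟩
  have hfv₀ : 0 < f v₀ :=
    lt_of_le_of_ne ((h v₀).mpr hv₀.le) (Ne.symm (mt (hzero v₀).mp hv₀.ne'))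
  refine ⟨f v₀ / g v₀, div_pos hfv₀ hv₀, ?_⟩
  ext v
  -- `g v₀ • v - g v • v₀` lies in `ker g = ker f`.
  have hker := (hzero (g v₀ • v - g v • v₀)).mpr (by simp [mul_comm])
  simp only [map_sub, map_smul, smul_eq_mul] at hker
  rw [smul_apply, smul_eq_mul, div_mul_eq_mul_div, eq_div_iff hv₀.ne']
  linarith

theorem exists_pos_smul_eq_of_nonneg_iff₂ {P S : V →ₗ[𝕜] W →ₗ[𝕜] 𝕜}
    (hS : ∀ v, S v = 0 → v = 0) (h : ∀ v w, 0 ≤ P v w ↔ 0 ≤ S v w) :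
    ∃ c : 𝕜, 0 < c ∧ P = c • S := by
  choose a ha hPa using fun v ↦ exists_pos_smul_eq_of_nonneg_iff (h v)
  choose b _ hPb using fun w ↦ exists_pos_smul_eq_of_nonneg_iff (f := P.flip w) (g := S.flip w)
    (h · w)
  have hab : ∀ v w, S v w ≠ 0 → a v = b w := fun v w hvw ↦
    mul_right_cancel₀ hvw <| by
      have := (LinearMap.congr_fun (hPa v) w).symm.trans (LinearMap.congr_fun (hPb w) v)
      simpa using this
  cases subsingleton_or_nontrivial V
  · exact ⟨1, one_pos, by ext v; simp [Subsingleton.elim v 0]⟩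
  obtain ⟨v₀, hv₀⟩ := exists_ne (0 : V)
  refine ⟨a v₀, ha v₀, ?_⟩
  ext v w
  by_cases hv : v = 0
  · simp [hv]
  obtain ⟨w', hvw', hv₀w'⟩ := exists_apply_ne_zero_and_apply_ne_zero (mt (hS v) hv) (mt (hS v₀) hv₀)
  rw [smul_apply, hPa v, hab v w' hvw', ← hab v₀ w' hv₀w']

end LinearMap

section SelfAdjoint

open ComplexConjugate

variable {X Y : Type*} [AddCommGroup X] [Module ℂ X] [StarAddMonoid X]
  [AddCommGroup Y] [Module ℂ Y] [StarAddMonoid Y]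

theorem ofReal_re_apply_of_isSelfAdjoint {B : X →ₗ[ℂ] Y →ₗ[ℂ] ℂ}
    (hB : ∀ x y, B (star x) (star y) = conj (B x y)) {x : X} {y : Y}
    (hx : IsSelfAdjoint x) (hy : IsSelfAdjoint y) : ((B x y).re : ℂ) = B x y :=
  Complex.conj_eq_iff_re.mp <| by rw [← hB, hx.star_eq, hy.star_eq]

variable [StarModule ℂ X] [StarModule ℂ Y]

theorem LinearMap.ext_of_isSelfAdjoint {M : Type*} [AddCommGroup M] [Module ℂ M]
    {f g : X →ₗ[ℂ] M} (h : ∀ x, IsSelfAdjoint x → f x = g x) : f = g := by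
  ext x
  rw [← realPart_add_I_smul_imaginaryPart x]
  simp [h _ (realPart x).2, h _ (imaginaryPart x).2]

theorem LinearMap.ext₂_of_isSelfAdjoint {B B' : X →ₗ[ℂ] Y →ₗ[ℂ] ℂ}
    (h : ∀ x y, IsSelfAdjoint x → IsSelfAdjoint y → B x y = B' x y) : B = B' :=
  ext_of_isSelfAdjoint fun x hx ↦ ext_of_isSelfAdjoint (h x · hx)

noncomputable def selfAdjointPairing (B : X →ₗ[ℂ] Y →ₗ[ℂ] ℂ) :
    selfAdjoint X →ₗ[ℝ] selfAdjoint Y →ₗ[ℝ] ℝ :=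
  LinearMap.mk₂ ℝ (fun x y ↦ (B x y).re) (by simp) (by simp) (by simp) (by simp)

theorem selfAdjointPairing_apply (B : X →ₗ[ℂ] Y →ₗ[ℂ] ℂ) (x : selfAdjoint X) (y : selfAdjoint Y) :
    selfAdjointPairing B x y = (B x y).re :=
  rfl

theorem exists_pos_eq_mul_of_nonneg_iff {Bπ Bσ : X →ₗ[ℂ] Y →ₗ[ℂ] ℂ}
    (hσ : ∀ x, (∀ y, Bσ x y = 0) → x = 0)
    (hπh : ∀ x y, Bπ (star x) (star y) = conj (Bπ x y))
    (hσh : ∀ x y, Bσ (star x) (star y) = conj (Bσ x y))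
    (H : ∀ x y, IsSelfAdjoint x → IsSelfAdjoint y → (0 ≤ Bπ x y ↔ 0 ≤ Bσ x y)) :
    ∃ l : ℝ, 0 < l ∧ ∀ x y, Bπ x y = l * Bσ x y := by
  have hπre (x : selfAdjoint X) (y : selfAdjoint Y) :=
    ofReal_re_apply_of_isSelfAdjoint hπh x.2 y.2
  have hσre (x : selfAdjoint X) (y : selfAdjoint Y) :=
    ofReal_re_apply_of_isSelfAdjoint hσh x.2 y.2
  have hnondeg (x : selfAdjoint X) (hx : selfAdjointPairing Bσ x = 0) : x = 0 := by
    refine Subtype.ext (hσ x fun y ↦ LinearMap.congr_fun (?_ : Bσ x = 0) y)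
    refine LinearMap.ext_of_isSelfAdjoint fun y hy ↦ ?_
    rw [← hσre x ⟨y, hy⟩, ← selfAdjointPairing_apply, hx]
    simp
  have hsign (x : selfAdjoint X) (y : selfAdjoint Y) :
      0 ≤ selfAdjointPairing Bπ x y ↔ 0 ≤ selfAdjointPairing Bσ x y := by
    have := H x y x.2 y.2
    rwa [← hπre, ← hσre, Complex.zero_le_real, Complex.zero_le_real] at this
  obtain ⟨l, hl, hPS⟩ := LinearMap.exists_pos_smul_eq_of_nonneg_iff₂ hnondeg hsign
  have hBπ : Bπ = (l : ℂ) • Bσ := LinearMap.ext₂_of_isSelfAdjoint fun x y hx hy ↦ by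
    have := LinearMap.congr_fun₂ hPS ⟨x, hx⟩ ⟨y, hy⟩
    rw [LinearMap.smul_apply, LinearMap.smul_apply, smul_eq_mul] at this ⊢
    rw [← hπre ⟨x, hx⟩ ⟨y, hy⟩, ← hσre ⟨x, hx⟩ ⟨y, hy⟩]
    exact_mod_cast this
  exact ⟨l, hl, fun x y ↦ by simp [hBπ]⟩

end SelfAdjoint

theorem Complex.ofReal_mul_nonneg_iff {l : ℝ} (hl : 0 < l) (z : ℂ) :
    0 ≤ (l : ℂ) * z ↔ 0 ≤ z := by
  simpa using mul_le_mul_iff_of_pos_left (b := 0) (c := z) (Complex.zero_lt_real.mpr hl)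

section Cones

variable {X Y : Type*} [AddCommGroup X] [Module ℂ X] [AddCommGroup Y] [Module ℂ Y]

def nonnegRay (x : X) : Set X :=
  (· • x) '' Set.Ici (0 : ℂ)

theorem dualConeR_nonnegRay [Star Y] (B : X →ₗ[ℂ] Y →ₗ[ℂ] ℂ) (x : X) :
    dualConeR B (nonnegRay x) = {y | star y = y ∧ 0 ≤ B x y} := by
  ext y
  refine and_congr_right fun _ ↦
    ⟨fun h ↦ by simpa using h x ⟨1, Set.mem_Ici.mpr zero_le_one, one_smul ℂ x⟩, ?_⟩
  rintro h _ ⟨c, hc, rfl⟩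
  simpa using mul_nonneg hc h

theorem dualConeL_nonnegRay [Star X] (B : X →ₗ[ℂ] Y →ₗ[ℂ] ℂ) (y : Y) :
    dualConeL B (nonnegRay y) = {x | star x = x ∧ 0 ≤ B x y} := by
  ext x
  refine and_congr_right fun _ ↦
    ⟨fun h ↦ by simpa using h y ⟨1, Set.mem_Ici.mpr zero_le_one, one_smul ℂ y⟩, ?_⟩
  rintro h _ ⟨c, hc, rfl⟩
  simpa using mul_nonneg hc h

variable {Bπ Bσ : X →ₗ[ℂ] Y →ₗ[ℂ] ℂ} {l : ℝ}

theorem dualConeR_eq_of_eq_mul [Star Y] (hl : 0 < l) (h : ∀ x y, Bπ x y = l * Bσ x y)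
    (C : Set X) : dualConeR Bπ C = dualConeR Bσ C := by
  simp only [dualConeR, h, Complex.ofReal_mul_nonneg_iff hl]

theorem dualConeL_eq_of_eq_mul [Star X] (hl : 0 < l) (h : ∀ x y, Bπ x y = l * Bσ x y)
    (D : Set Y) : dualConeL Bπ D = dualConeL Bσ D := by
  simp only [dualConeL, h, Complex.ofReal_mul_nonneg_iff hl]

theorem nonneg_iff_of_dualConeR_eq [Star Y] {x : X} {y : Y} (hy : star y = y)
    (h : dualConeR Bπ (nonnegRay x) = dualConeR Bσ (nonnegRay x)) :
    0 ≤ Bπ x y ↔ 0 ≤ Bσ x y := by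
  simpa [dualConeR_nonnegRay, hy] using Set.ext_iff.mp h y

theorem nonneg_iff_of_dualConeL_eq [Star X] {x : X} {y : Y} (hx : star x = x)
    (h : dualConeL Bπ (nonnegRay y) = dualConeL Bσ (nonnegRay y)) :
    0 ≤ Bπ x y ↔ 0 ≤ Bσ x y := by
  simpa [dualConeL_nonnegRay, hx] using Set.ext_iff.mp h x

end Cones

theorem isClosedConvexConeH_nonnegRay {X : Type*} [NormedAddCommGroup X] [NormedSpace ℂ X]
    [StarAddMonoid X] [StarModule ℂ X] {x : X} (hx : IsSelfAdjoint x) :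
    IsClosedConvexConeH (nonnegRay x) := by
  refine ⟨?_, ⟨0, Set.self_mem_Ici, zero_smul ℂ x⟩, ?_, ?_, isClosedMap_smul_left x _ isClosed_Ici⟩
  all_goals simp only [nonnegRay, Set.mem_image, Set.mem_Ici]
  · rintro _ ⟨c, hc, rfl⟩
    rw [star_smul, hx.star_eq, (IsSelfAdjoint.of_nonneg hc).star_eq]
  · rintro _ ⟨c, hc, rfl⟩ _ ⟨d, hd, rfl⟩
    exact ⟨c + d, add_nonneg hc hd, add_smul c d x⟩
  · rintro r hr _ ⟨c, hc, rfl⟩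
    exact ⟨r * c, mul_nonneg (Complex.zero_le_real.mpr hr) hc, mul_smul (r : ℂ) c x⟩

theorem stmt_1_general {X Y : Type*}
    [NormedAddCommGroup X] [NormedSpace ℂ X] [StarAddMonoid X] [StarModule ℂ X]
    [NormedAddCommGroup Y] [NormedSpace ℂ Y] [StarAddMonoid Y] [StarModule ℂ Y]
    (Bπ Bσ : X →ₗ[ℂ] Y →ₗ[ℂ] ℂ)
    (hσnd : (∀ x, (∀ y, Bσ x y = 0) → x = 0) ∧ (∀ y, (∀ x, Bσ x y = 0) → y = 0))
    (hπh : ∀ x y, Bπ (star x) (star y) = starRingEnd ℂ (Bπ x y))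
    (hσh : ∀ x y, Bσ (star x) (star y) = starRingEnd ℂ (Bσ x y)) :
    ((∃ l : ℝ, 0 < l ∧ ∀ x y, Bπ x y = (l : ℂ) * Bσ x y) ↔
      ∀ C : Set X, IsClosedConvexConeH C → dualConeR Bπ C = dualConeR Bσ C) ∧
    ((∃ l : ℝ, 0 < l ∧ ∀ x y, Bπ x y = (l : ℂ) * Bσ x y) ↔
      ∀ D : Set Y, IsClosedConvexConeH D → dualConeL Bπ D = dualConeL Bσ D) := by
  have proportional := exists_pos_eq_mul_of_nonneg_iff hσnd.1 hπh hσh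
  refine ⟨⟨fun ⟨l, hl, h⟩ ↦ fun C _ ↦ dualConeR_eq_of_eq_mul hl h C, fun hd ↦ ?_⟩,
    ⟨fun ⟨l, hl, h⟩ ↦ fun D _ ↦ dualConeL_eq_of_eq_mul hl h D, fun hd ↦ ?_⟩⟩
  · exact proportional fun x y hx hy ↦
      nonneg_iff_of_dualConeR_eq hy (hd _ (isClosedConvexConeH_nonnegRay hx))
  · exact proportional fun x y hx hy ↦
      nonneg_iff_of_dualConeL_eq hx (hd _ (isClosedConvexConeH_nonnegRay hy))

/-- For non-degenerate Hermiticity preserving bilinear pairings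
`Bπ`, `Bσ` on `X × Y` (finite-dimensional ∗-vector spaces of the same dimension),
the following are equivalent: (i) `Bπ = λ • Bσ` for some `λ > 0`;
(ii) duals of all closed convex cones of `X_h` agree; (iii) duals of all closed
convex cones of `Y_h` agree. -/
theorem stmt_1 {X Y : Type*}
    [NormedAddCommGroup X] [NormedSpace ℂ X] [StarAddMonoid X] [StarModule ℂ X]
    [FiniteDimensional ℂ X]
    [NormedAddCommGroup Y] [NormedSpace ℂ Y] [StarAddMonoid Y] [StarModule ℂ Y]
    [FiniteDimensional ℂ Y]
    (hdim : Module.finrank ℂ X = Module.finrank ℂ Y)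
    (Bπ Bσ : X →ₗ[ℂ] Y →ₗ[ℂ] ℂ)
    (hπnd : (∀ x, (∀ y, Bπ x y = 0) → x = 0) ∧ (∀ y, (∀ x, Bπ x y = 0) → y = 0))
    (hσnd : (∀ x, (∀ y, Bσ x y = 0) → x = 0) ∧ (∀ y, (∀ x, Bσ x y = 0) → y = 0))
    (hπh : ∀ x y, Bπ (star x) (star y) = starRingEnd ℂ (Bπ x y))
    (hσh : ∀ x y, Bσ (star x) (star y) = starRingEnd ℂ (Bσ x y)) :
    ((∃ l : ℝ, 0 < l ∧ ∀ x y, Bπ x y = (l : ℂ) * Bσ x y) ↔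
      ∀ C : Set X, IsClosedConvexConeH C → dualConeR Bπ C = dualConeR Bσ C) ∧
    ((∃ l : ℝ, 0 < l ∧ ∀ x y, Bπ x y = (l : ℂ) * Bσ x y) ↔
      ∀ D : Set Y, IsClosedConvexConeH D → dualConeL Bπ D = dualConeL Bσ D) :=
  stmt_1_general Bπ Bσ hσnd hπh hσh
end

section
/- Let V and W be nonzero finite-dimensional complex vector spaces, ⟨·,·⟩_V a non-degenerate bilinear form on V, and {e_i}, {f_i} bases of V with ⟨e_i,f_j⟩_V = δ_{ij}; define Γ : L(V,W) → V ⊗ W by Γ(φ) = Σ_i e_i ⊗ φ(f_i). For a linear isomorphism Θ on V ⊗ W, the following are equivalent: (i) there exist bases {e'_i} and {f'_i} of V such that Θ(Γ(φ)) = Σ_i e'_i ⊗ φ(f'_i) for every linear map φ : V → W; (ii) Θ = σ ⊗ id_W for some linear isomorphism σ on V (i.e., Θ(v⊗w) = σ(v)⊗w for all v ∈ V, w ∈ W). -/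
open scoped TensorProduct

/-!
Since `B v (f i)` is the `i`-th coordinate of `v` in the basis `e`, feeding the rank-one map
`φ = B v (·) • w` into (i) gives `Θ (v ⊗ w) = σ v ⊗ w` with `σ v = ∑ i, B v (f' i) • e' i`;
`σ` is injective because `Θ` is and `v ⊗ w ≠ 0` for `v, w ≠ 0`. Conversely, `σ ⊗ id` sends
`∑ i, e i ⊗ φ (f i)` to the same expression for the bases `σ e` and `f`.
-/

namespace TensorProduct

theorem eq_zero_of_tmul_eq_zero {K V W : Type*} [Field K] [AddCommGroup V] [Module K V]
    [AddCommGroup W] [Module K W] {v : V} {w : W} (hvw : v ⊗ₜ[K] w = 0) (hw : w ≠ 0) :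
    v = 0 := by
  obtain ⟨g, hg⟩ : ∃ g : Module.Dual K W, g w ≠ 0 := by
    by_contra! h
    exact hw ((Module.forall_dual_apply_eq_zero_iff K w).mp h)
  have : g w • v = 0 := by
    simpa using congrArg (TensorProduct.rid K V ∘ LinearMap.lTensor V g) hvw
  exact (smul_eq_zero.mp this).resolve_left hg

theorem sum_tmul_smul {R M N ι : Type*} [CommSemiring R] [AddCommMonoid M] [Module R M]
    [AddCommMonoid N] [Module R N] (s : Finset ι) (c : ι → R) (m : ι → M) (n : N) :
    ∑ i ∈ s, m i ⊗ₜ[R] (c i • n) = (∑ i ∈ s, c i • m i) ⊗ₜ[R] n := by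
  simp only [← smul_tmul, sum_tmul]

end TensorProduct

theorem Module.Basis.pairing_eq_repr {R M ι : Type*} [CommSemiring R] [AddCommMonoid M]
    [Module R M] [DecidableEq ι] (e : Module.Basis ι R M) (B : M →ₗ[R] M →ₗ[R] R) (f : ι → M)
    (hef : ∀ i j, B (e i) (f j) = if i = j then 1 else 0) (v : M) (i : ι) :
    B v (f i) = e.repr v i := by
  have : B.flip (f i) = e.coord i := e.ext fun j => by
    simp [hef, Finsupp.single_apply]
  exact LinearMap.congr_fun this v

theorem injective_of_map_tmul_eq_tmul {K V W : Type*} [Field K] [AddCommGroup V] [Module K V]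
    [AddCommGroup W] [Module K W] [Nontrivial W] (Θ : V ⊗[K] W ≃ₗ[K] V ⊗[K] W) (σ : V →ₗ[K] V)
    (hσ : ∀ v w, Θ (v ⊗ₜ w) = σ v ⊗ₜ w) : Function.Injective σ := by
  obtain ⟨w, hw⟩ := exists_ne (0 : W)
  refine (injective_iff_map_eq_zero σ).mpr fun v hv => ?_
  refine TensorProduct.eq_zero_of_tmul_eq_zero (Θ.map_eq_zero_iff.mp ?_) hw
  rw [hσ, hv, TensorProduct.zero_tmul]

theorem map_tmul_eq_of_map_sum_tmul {R V W ι : Type*} [CommSemiring R] [AddCommMonoid V]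
    [Module R V] [AddCommMonoid W] [Module R W] [Fintype ι] [DecidableEq ι]
    (B : V →ₗ[R] V →ₗ[R] R) (e : Module.Basis ι R V) (f e' f' : ι → V)
    (hef : ∀ i j, B (e i) (f j) = if i = j then 1 else 0) (Θ : V ⊗[R] W →ₗ[R] V ⊗[R] W)
    (hΘ : ∀ φ : V →ₗ[R] W, Θ (∑ i, e i ⊗ₜ[R] φ (f i)) = ∑ i, e' i ⊗ₜ[R] φ (f' i))
    (v : V) (w : W) : Θ (v ⊗ₜ w) = (∑ i, B v (f' i) • e' i) ⊗ₜ w := by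
  simpa only [LinearMap.smulRight_apply, TensorProduct.sum_tmul_smul,
    e.pairing_eq_repr B f hef, e.sum_repr] using hΘ ((B v).smulRight w)

theorem stmt_10_general {V W : Type*}
    [AddCommGroup V] [Module ℂ V] [FiniteDimensional ℂ V]
    [AddCommGroup W] [Module ℂ W] [Nontrivial W]
    {ι : Type*} [Fintype ι] [DecidableEq ι]
    (B : V →ₗ[ℂ] V →ₗ[ℂ] ℂ)
    (e f : Module.Basis ι ℂ V)
    (hef : ∀ i j, B (e i) (f j) = if i = j then 1 else 0)
    (Θ : V ⊗[ℂ] W ≃ₗ[ℂ] V ⊗[ℂ] W) :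
    (∃ e' f' : Module.Basis ι ℂ V, ∀ φ : V →ₗ[ℂ] W,
        Θ (∑ i, e i ⊗ₜ[ℂ] φ (f i)) = ∑ i, e' i ⊗ₜ[ℂ] φ (f' i)) ↔
      (∃ σ : V ≃ₗ[ℂ] V, ∀ (v : V) (w : W), Θ (v ⊗ₜ[ℂ] w) = σ v ⊗ₜ[ℂ] w) := by
  constructor
  · rintro ⟨e', f', hΘ⟩
    let σ : V →ₗ[ℂ] V := ∑ i, (B.flip (f' i)).smulRight (e' i)
    have hσ : ∀ v w, Θ (v ⊗ₜ w) = σ v ⊗ₜ w := fun v w => by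
      simpa [σ] using map_tmul_eq_of_map_sum_tmul B e f e' f' hef Θ.toLinearMap hΘ v w
    exact ⟨.ofInjectiveEndo σ (injective_of_map_tmul_eq_tmul Θ σ hσ), hσ⟩
  · rintro ⟨σ, hσ⟩
    refine ⟨e.map σ, f, fun φ => ?_⟩
    simp [map_sum, hσ]

/-- Let `V`, `W` be nonzero finite-dimensional complex vector spaces,
`B` a non-degenerate bilinear form on `V`, and `e`, `f` bases of `V` with
`B (e i) (f j) = δ_{ij}`; let `Γ(φ) = Σ_i e i ⊗ φ (f i)`. For a linear isomorphism
`Θ` of `V ⊗ W`, the following are equivalent: (i) there exist bases `e'`, `f'` of `V`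
with `Θ (Γ φ) = Σ_i e' i ⊗ φ (f' i)` for every `φ`; (ii) `Θ = σ ⊗ id_W` for some
linear isomorphism `σ` of `V`. -/
theorem stmt_10 {V W : Type*}
    [AddCommGroup V] [Module ℂ V] [FiniteDimensional ℂ V] [Nontrivial V]
    [AddCommGroup W] [Module ℂ W] [FiniteDimensional ℂ W] [Nontrivial W]
    {ι : Type*} [Fintype ι] [DecidableEq ι]
    (B : V →ₗ[ℂ] V →ₗ[ℂ] ℂ)
    (hnd : (∀ v, (∀ v', B v v' = 0) → v = 0) ∧ (∀ v', (∀ v, B v v' = 0) → v' = 0))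
    (e f : Module.Basis ι ℂ V)
    (hef : ∀ i j, B (e i) (f j) = if i = j then 1 else 0)
    (Θ : V ⊗[ℂ] W ≃ₗ[ℂ] V ⊗[ℂ] W) :
    (∃ e' f' : Module.Basis ι ℂ V, ∀ φ : V →ₗ[ℂ] W,
        Θ (∑ i, e i ⊗ₜ[ℂ] φ (f i)) = ∑ i, e' i ⊗ₜ[ℂ] φ (f' i)) ↔
      (∃ σ : V ≃ₗ[ℂ] V, ∀ (v : V) (w : W), Θ (v ⊗ₜ[ℂ] w) = σ v ⊗ₜ[ℂ] w) :=
  stmt_10_general B e f hef Θ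
end
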